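/- Let A be a C*-algebra and (e_n) a sequence of positive norm-one elements with e_n e_{n+1} = e_{n+1} for all n. Then the sets K_n := {f ∈ A* : ‖f‖ ≤ 1, f ≥ 0, f(e_n) = 1} form a decreasing sequence of non-empty weak-* compact faces of the state space of A, and their intersection contains a pure state φ (so φ(e_n) = 1 for all n). -/

import Mathlib

/-!
A functional `f` with `‖f‖ ≤ 1` and `f 1 = 1` is positive (for self-adjoint `a`,
`‖a + it‖² ≤ ‖a‖² + t²` for all real `t` forces `f a` to be real), so the whole statement reduces
to norm estimates. Since `|f e| ≤ 1` on the state space, `K_e` is the set where `f e` hits the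
boundary point `1` of the unit disc, and strict convexity of the disc makes it a face. Hahn–Banach
gives `g` with `‖g‖ ≤ 1`, `g e = 1`, and then `g 1 = 1` because `1` is the midpoint of `g 1` and
`g (2e - 1)`, both in the unit disc. From `e_n e_{n+1} = e_{n+1}` we get
`e_{n+1} = e_n e_{n+1} e_n ≤ e_n² ≤ e_n`, so the `K_n` decrease. Their intersection is a non-empty
compact face (Banach–Alaoglu, Cantor), so by Krein–Milman it has an extreme point, which is
extreme in the state space since a face of a face is a face.
-/

open scoped ComplexOrder ComplexInnerProductSpace
open Filter Topology

noncomputable section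

section KSets

variable {A : Type*} [NormedRing A] [StarRing A] [NormedAlgebra ℂ A] [PartialOrder A]

/-- The set `K_e` of positive functionals of norm at most one with `f e = 1`, inside the
weak-* dual. -/
def stateKSet (e : A) : Set (WeakDual ℂ A) :=
  {f | (∀ a : A, ‖f a‖ ≤ ‖a‖) ∧ (∀ a : A, 0 ≤ a → 0 ≤ f a) ∧ f e = 1}

/-- The state space of the unital C*-algebra `A`, inside the weak-* dual. -/
def stateSetW : Set (WeakDual ℂ A) :=
  {f | (∀ a : A, ‖f a‖ ≤ ‖a‖) ∧ (∀ a : A, 0 ≤ a → 0 ≤ f a) ∧ f 1 = 1}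

end KSets

theorem eq_and_eq_of_combo_eq_of_norm_le {E : Type*} [NormedAddCommGroup E] [NormedSpace ℝ E]
    [StrictConvexSpace ℝ E] {x y z : E} {a b : ℝ} (hx : ‖x‖ ≤ ‖z‖) (hy : ‖y‖ ≤ ‖z‖)
    (ha : 0 < a) (hb : 0 < b) (hab : a + b = 1) (h : a • x + b • y = z) : x = z ∧ y = z := by
  obtain rfl : x = y := by
    by_contra hne
    exact (norm_combo_lt_of_ne hx hy hne ha hb hab).ne (congrArg norm h)
  rw [← add_smul, hab, one_smul] at h
  exact ⟨h, h⟩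

theorem exists_mem_extremePoints_forall_mem {E : Type*} [AddCommGroup E] [Module ℝ E]
    [TopologicalSpace E] [T2Space E] [IsTopologicalAddGroup E] [ContinuousSMul ℝ E]
    [LocallyConvexSpace ℝ E] {S : Set E} {K : ℕ → Set E} (hdec : ∀ n, K (n + 1) ⊆ K n)
    (hne : ∀ n, (K n).Nonempty) (hcpt : ∀ n, IsCompact (K n)) (hext : ∀ n, IsExtreme ℝ S (K n)) :
    ∃ x ∈ S.extremePoints ℝ, ∀ n, x ∈ K n := by
  have hclosed (n : ℕ) : IsClosed (K n) := (hcpt n).isClosed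
  have hcpt_iInter : IsCompact (⋂ n, K n) :=
    (hcpt 0).of_isClosed_subset (isClosed_iInter hclosed) (Set.iInter_subset _ 0)
  obtain ⟨x, hx⟩ := hcpt_iInter.extremePoints_nonempty
    (IsCompact.nonempty_iInter_of_sequence_nonempty_isCompact_isClosed K hdec hne (hcpt 0) hclosed)
  exact ⟨x, (isExtreme_iInter hext).extremePoints_subset_extremePoints hx, Set.mem_iInter.1 hx.1⟩

theorem Real.eq_zero_of_forall_mul_le {c M : ℝ} (h : ∀ t : ℝ, t * c ≤ M) : c = 0 := by
  by_contra hc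
  have hM := h ((|M| + 1) / c)
  rw [div_mul_cancel₀ _ hc] at hM
  linarith [le_abs_self M]

instance WeakDual.locallyConvexSpace {E : Type*} [NormedAddCommGroup E] [NormedSpace ℂ E] :
    LocallyConvexSpace ℝ (WeakDual ℂ E) :=
  WeakBilin.locallyConvexSpace

section WeakDual

variable {A : Type*} [NormedRing A] [NormedAlgebra ℂ A]

theorem mem_openSegment_of_forall_apply_eq {f g h : WeakDual ℂ A} {t : ℝ} (ht0 : 0 < t)
    (ht1 : t < 1) (H : ∀ x : A, h x = (t : ℂ) * f x + ((1 - t : ℝ) : ℂ) * g x) :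
    h ∈ openSegment ℝ f g :=
  ⟨t, 1 - t, ht0, sub_pos.2 ht1, add_sub_cancel t 1,
    DFunLike.ext _ _ fun x ↦ (H x).symm ▸ by rw [← Complex.real_smul, ← Complex.real_smul]; rfl⟩

theorem isCompact_stateKSet [PartialOrder A] (e : A) : IsCompact (stateKSet e) := by
  have hclosed : IsClosed (stateKSet e) := by
    simp only [stateKSet, Set.ofPred_and, Set.ofPred_forall]
    refine (isClosed_iInter fun a ↦ ?_).inter
      ((isClosed_iInter fun a ↦ isClosed_iInter fun _ ↦ ?_).inter ?_)
    · exact isClosed_le (WeakDual.eval_continuous a).norm continuous_const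
    · exact isClosed_le continuous_const (WeakDual.eval_continuous a)
    · exact isClosed_eq (WeakDual.eval_continuous e) continuous_const
  refine (WeakDual.isCompact_closedBall (𝕜 := ℂ) (E := A) 0 1).of_isClosed_subset hclosed
    fun f hf ↦ ?_
  rw [Set.mem_preimage, mem_closedBall_zero_iff]
  exact ContinuousLinearMap.opNorm_le_bound _ zero_le_one fun x ↦ (one_mul ‖x‖).symm ▸ hf.1 x

end WeakDual

section CStarAlgebra

variable {A : Type*} [CStarAlgebra A]

theorem im_apply_eq_zero_of_isSelfAdjoint [Nontrivial A] {f : WeakDual ℂ A}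
    (hf : ∀ x, ‖f x‖ ≤ ‖x‖) (hf1 : f 1 = 1) {a : A} (ha : IsSelfAdjoint a) : (f a).im = 0 := by
  suffices key : ∀ t : ℝ, t * (2 * (f a).im) ≤ ‖a‖ ^ 2 by
    simpa using Real.eq_zero_of_forall_mul_le key
  intro t
  set c : ℂ := t * Complex.I
  set b : A := a + c • (1 : A)
  have hstar : star b * b = a * a + ((t : ℂ) ^ 2) • (1 : A) := by
    have hc : c + star c = 0 := by simp [c]
    have hcc : star c * c = (t : ℂ) ^ 2 := by simp [c, Complex.ext_iff, sq]
    calc star b * b = (a + star c • 1) * (a + c • 1) := by simp [b, star_smul, ha.star_eq]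
      _ = a * a + (c + star c) • a + (star c * c) • (1 : A) := by
        simp only [add_mul, mul_add, smul_mul_assoc, mul_smul_comm, one_mul, mul_one]
        module
      _ = a * a + ((t : ℂ) ^ 2) • (1 : A) := by rw [hc, hcc, zero_smul, add_zero]
  have hb : ‖b‖ ^ 2 ≤ ‖a‖ ^ 2 + t ^ 2 := by
    rw [sq, ← CStarRing.norm_star_mul_self, hstar, ← ha.norm_mul_self]
    refine (norm_add_le _ _).trans (add_le_add le_rfl ?_)
    simp [norm_smul]
  have hfb : ‖f a + t * Complex.I‖ ≤ ‖b‖ := by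
    simpa [b, c, map_smul, hf1] using hf b
  have hnorm : ‖f a + t * Complex.I‖ ^ 2 = (f a).re ^ 2 + ((f a).im + t) ^ 2 := by
    rw [Complex.sq_norm, Complex.normSq_apply]
    simp only [Complex.add_re, Complex.add_im, Complex.mul_re, Complex.mul_im, Complex.ofReal_re,
      Complex.ofReal_im, Complex.I_re, Complex.I_im, mul_zero, mul_one, sub_self, add_zero]
    ring
  nlinarith [pow_le_pow_left₀ (norm_nonneg _) hfb 2, sq_nonneg (f a).re, sq_nonneg (f a).im]

variable [PartialOrder A] [StarOrderedRing A]

theorem mul_self_le_self_of_le_one {q : A} (hq : 0 ≤ q) (hq1 : q ≤ 1) : q * q ≤ q := by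
  obtain ⟨s, hs, rfl⟩ : ∃ s : A, IsSelfAdjoint s ∧ s * s = q :=
    ⟨CFC.sqrt q, .of_nonneg (CFC.sqrt_nonneg q), CFC.sqrt_mul_sqrt_self q hq⟩
  calc s * s * (s * s) = s * (s * s) * s := by simp only [mul_assoc]
    _ ≤ s * 1 * s := hs.conjugate_le_conjugate hq1
    _ = s * s := by rw [mul_one]

theorem le_of_mul_eq_self {p q : A} (hp : 0 ≤ p) (hp1 : p ≤ 1) (hq : 0 ≤ q) (hq1 : q ≤ 1)
    (h : q * p = p) : p ≤ q := by
  have hq' : IsSelfAdjoint q := .of_nonneg hq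
  have hpq : p * q = p := by
    simpa [(IsSelfAdjoint.of_nonneg hp).star_eq, hq'.star_eq] using congr(star $h)
  calc p = q * p * q := by rw [h, hpq]
    _ ≤ q * 1 * q := hq'.conjugate_le_conjugate hp1
    _ = q * q := by rw [mul_one]
    _ ≤ q := mul_self_le_self_of_le_one hq hq1

theorem norm_add_self_sub_one_le_one {e : A} (he : 0 ≤ e) (he1 : e ≤ 1) :
    ‖e + e - 1‖ ≤ 1 := by
  have hh : IsSelfAdjoint (e + e - 1) :=
    ((IsSelfAdjoint.of_nonneg he).add (.of_nonneg he)).sub (.one A)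
  have hsq : (e + e - 1) * (e + e - 1) ≤ 1 := by
    have : (e + e - 1) * (e + e - 1) + 4 • (e - e * e) = 1 := by noncomm_ring
    conv_rhs => rw [← this]
    exact le_add_of_nonneg_right <|
      nsmul_nonneg (sub_nonneg.2 (mul_self_le_self_of_le_one he he1)) 4
  have hnorm := (CStarAlgebra.norm_le_one_iff_of_nonneg _ hh.mul_self_nonneg).2 hsq
  rw [hh.norm_mul_self] at hnorm
  nlinarith [norm_nonneg (e + e - 1)]

theorem stateKSet_subset_stateKSet {p q : A} (hpq : p ≤ q) (hq : ‖q‖ ≤ 1) :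
    stateKSet p ⊆ stateKSet q := by
  rintro f ⟨hbound, hpos, hfp⟩
  refine ⟨hbound, hpos, ?_⟩
  obtain ⟨hre, him⟩ := Complex.nonneg_iff.1 (hpos _ (sub_nonneg.2 hpq))
  have hle : (f q).re ≤ 1 := (Complex.re_le_norm _).trans ((hbound q).trans hq)
  rw [map_sub, hfp] at hre him
  apply Complex.ext <;> simp only [Complex.sub_re, Complex.sub_im, Complex.one_re,
    Complex.one_im] at * <;> linarith

variable [Nontrivial A]

theorem isExtreme_stateKSet {e : A} (he : 0 ≤ e) (he1 : ‖e‖ ≤ 1) :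
    IsExtreme ℝ stateSetW (stateKSet e) := by
  refine ⟨stateKSet_subset_stateKSet ((CStarAlgebra.norm_le_one_iff_of_nonneg e he).1 he1)
    norm_one.le, ?_⟩
  rintro f ⟨hfb, hfp, -⟩ g ⟨hgb, -, -⟩ h ⟨-, -, hhe⟩ ⟨a, b, ha, hb, hab, rfl⟩
  have hfe : ‖f e‖ ≤ ‖(1 : ℂ)‖ := by simpa using (hfb e).trans he1
  have hge : ‖g e‖ ≤ ‖(1 : ℂ)‖ := by simpa using (hgb e).trans he1
  exact ⟨hfb, hfp, (eq_and_eq_of_combo_eq_of_norm_le hfe hge ha hb hab hhe).1⟩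

section Functional

variable {f : WeakDual ℂ A}

theorem re_apply_nonneg_of_nonneg (hf : ∀ x, ‖f x‖ ≤ ‖x‖) (hf1 : f 1 = 1) {a : A} (ha : 0 ≤ a) :
    0 ≤ (f a).re := by
  have hnorm : ‖algebraMap ℝ A ‖a‖ - a‖ ≤ ‖a‖ := by
    calc ‖algebraMap ℝ A ‖a‖ - a‖ ≤ ‖algebraMap ℝ A ‖a‖‖ :=
          CStarAlgebra.norm_le_norm_of_nonneg_of_le
            (sub_nonneg.2 (IsSelfAdjoint.of_nonneg ha).le_algebraMap_norm_self) (sub_le_self _ ha)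
      _ = ‖a‖ := by simp [norm_algebraMap']
  have hfr : f (algebraMap ℝ A ‖a‖ - a) = ‖a‖ - f a := by
    rw [map_sub, IsScalarTower.algebraMap_apply ℝ ℂ A, Algebra.algebraMap_eq_smul_one, map_smul,
      hf1, smul_eq_mul, mul_one]
    rfl
  have hre := (Complex.re_le_norm _).trans ((hf _).trans hnorm)
  rw [hfr] at hre
  simpa using hre

theorem apply_nonneg_of_nonneg (hf : ∀ x, ‖f x‖ ≤ ‖x‖) (hf1 : f 1 = 1) {a : A} (ha : 0 ≤ a) :
    0 ≤ f a :=
  Complex.nonneg_iff.2 ⟨re_apply_nonneg_of_nonneg hf hf1 ha,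
    (im_apply_eq_zero_of_isSelfAdjoint hf hf1 (.of_nonneg ha)).symm⟩

theorem apply_one_eq_one_of_apply_eq_one (hf : ∀ x, ‖f x‖ ≤ ‖x‖) {e : A} (he : 0 ≤ e)
    (he1 : e ≤ 1) (hfe : f e = 1) : f 1 = 1 := by
  have hcombo : (1 / 2 : ℝ) • f 1 + (1 / 2 : ℝ) • f (e + e - 1) = 1 := by
    rw [map_sub, map_add, hfe]
    simp only [one_div, Complex.real_smul, Complex.ofReal_inv, Complex.ofReal_ofNat]
    ring
  refine (eq_and_eq_of_combo_eq_of_norm_le ?_ ?_ one_half_pos one_half_pos (by norm_num) hcombo).1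
  · simpa using hf 1
  · simpa using (hf _).trans (norm_add_self_sub_one_le_one he he1)

end Functional

theorem stateKSet_nonempty {e : A} (he : 0 ≤ e) (he1 : ‖e‖ = 1) : (stateKSet e).Nonempty := by
  obtain ⟨g, hg, hge⟩ := exists_dual_vector'' ℂ e
  set f : WeakDual ℂ A := StrongDual.toWeakDual g
  have hf (x : A) : ‖f x‖ ≤ ‖x‖ := (g.le_of_opNorm_le hg x).trans_eq (one_mul _)
  have hfe : f e = 1 := hge.trans (by simp [he1])
  have hf1 : f 1 = 1 := apply_one_eq_one_of_apply_eq_one hf he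
    ((CStarAlgebra.norm_le_one_iff_of_nonneg e he).1 he1.le) hfe
  exact ⟨f, hf, fun a ha ↦ apply_nonneg_of_nonneg hf hf1 ha, hfe⟩

theorem exists_mem_extremePoints_stateSetW_forall_mem_stateKSet {e : ℕ → A}
    (hpos : ∀ n, 0 ≤ e n) (hnorm : ∀ n, ‖e n‖ = 1)
    (hdec : ∀ n, stateKSet (e (n + 1)) ⊆ stateKSet (e n)) :
    ∃ φ ∈ (stateSetW : Set (WeakDual ℂ A)).extremePoints ℝ, ∀ n, φ ∈ stateKSet (e n) := by
  -- The faces are passed only once the instance arguments are synthesized: unifying them first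
  -- would pick an `ℝ`-module structure on `WeakDual ℂ A` with no `ContinuousSMul` instance.
  have key := exists_mem_extremePoints_forall_mem (S := stateSetW) hdec
    (fun n ↦ stateKSet_nonempty (hpos n) (hnorm n)) (fun n ↦ isCompact_stateKSet (e n))
  exact key fun n ↦ isExtreme_stateKSet (hpos n) (hnorm n).le

end CStarAlgebra

/-- for a sequence `(e n)` of positive norm-one elements with
`e n * e (n+1) = e (n+1)`, the sets `K n = {f : ‖f‖ ≤ 1, f ≥ 0, f (e n) = 1}` form a
decreasing sequence of non-empty weak-* compact faces of the state space, whose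
intersection contains a pure state `φ` (so `φ (e n) = 1` for all `n`). -/
theorem decreasing_compact_faces_contain_pure_state
    {A : Type*} [NormedRing A] [StarRing A] [CStarRing A] [NormedAlgebra ℂ A]
    [StarModule ℂ A] [PartialOrder A] [StarOrderedRing A] [CompleteSpace A]
    (e : ℕ → A) (hpos : ∀ n, 0 ≤ e n) (hnorm : ∀ n, ‖e n‖ = 1)
    (hstep : ∀ n, e n * e (n + 1) = e (n + 1)) :
    (∀ n, (stateKSet (e n)).Nonempty) ∧
    (∀ n, stateKSet (e (n + 1)) ⊆ stateKSet (e n)) ∧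
    (∀ n, IsCompact (stateKSet (e n))) ∧
    (∀ n, stateKSet (e n) ⊆ stateSetW) ∧
    (∀ n, ∀ f g h : WeakDual ℂ A, f ∈ stateSetW → g ∈ stateSetW → h ∈ stateKSet (e n) →
      ∀ t : ℝ, 0 < t → t < 1 →
        (∀ x : A, h x = (t : ℂ) * f x + (((1 - t : ℝ)) : ℂ) * g x) →
        f ∈ stateKSet (e n) ∧ g ∈ stateKSet (e n)) ∧
    (∃ φ : WeakDual ℂ A, φ ∈ stateSetW ∧
      (∀ f g : WeakDual ℂ A, f ∈ stateSetW → g ∈ stateSetW →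
        ∀ t : ℝ, 0 < t → t < 1 →
          (∀ x : A, φ x = (t : ℂ) * f x + (((1 - t : ℝ)) : ℂ) * g x) →
          f = φ ∧ g = φ) ∧
      ∀ n, φ ∈ stateKSet (e n)) := by
  let _ : CStarAlgebra A := { ‹NormedRing A›, ‹StarRing A›, ‹CStarRing A›, ‹NormedAlgebra ℂ A›,
    ‹StarModule ℂ A›, ‹CompleteSpace A› with }
  have : Nontrivial A := ⟨e 0, 0, fun h ↦ by simpa [h] using hnorm 0⟩
  have hle_one n : e n ≤ 1 := (CStarAlgebra.norm_le_one_iff_of_nonneg _ (hpos n)).1 (hnorm n).le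
  have hdec n : stateKSet (e (n + 1)) ⊆ stateKSet (e n) :=
    stateKSet_subset_stateKSet
      (le_of_mul_eq_self (hpos _) (hle_one _) (hpos n) (hle_one n) (hstep n)) (hnorm n).le
  have hface n : IsExtreme ℝ stateSetW (stateKSet (e n)) :=
    isExtreme_stateKSet (hpos n) (hnorm n).le
  obtain ⟨φ, hφ, hφK⟩ := exists_mem_extremePoints_stateSetW_forall_mem_stateKSet hpos hnorm hdec
  refine ⟨fun n ↦ stateKSet_nonempty (hpos n) (hnorm n), hdec, fun n ↦ isCompact_stateKSet (e n),
    fun n ↦ (hface n).subset, fun n f g h hf hg hh t ht0 ht1 H ↦ ?_, φ, hφ.1,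
    fun f g hf hg t ht0 ht1 H ↦ (mem_extremePoints.1 hφ).2 f hf g hg
      (mem_openSegment_of_forall_apply_eq ht0 ht1 H), hφK⟩
  have hseg := mem_openSegment_of_forall_apply_eq ht0 ht1 H
  exact ⟨(hface n).left_mem_of_mem_openSegment hf hg hh hseg,
    (hface n).right_mem_of_mem_openSegment hf hg hh hseg⟩
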